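/- Let λ₁, λ₂ > 0, a > 0, D ≥ 0 be reals and let x ≥ √a · D. Then (1 − exp(−π λ₂ x²)) · ∫_{x / √a}^{∞} 2π λ₁ r · exp(−π λ₁ r²) dr + ∫_{D}^{x/√a} (1 − exp(−π λ₂ a r²)) · 2π λ₁ r · exp(−π λ₁ r²) dr = exp(−π λ₁ D²) − (λ₁ / (λ₁ + λ₂ a)) · exp(−π (λ₁ + λ₂ a) D²) − (λ₂ a / (λ₁ + λ₂ a)) · exp(−π (λ₁/a + λ₂) x²). -/

import Mathlib

/-!
Both integrals are elementary: `2 b r e^{-b r²}` is the derivative of `-e^{-b r²}`, and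
`(1 - e^{-β r²}) 2 b r e^{-b r²}` is that expression minus `b / (b + β)` times the same one
with `b + β` in place of `b`. At the upper limit `x / √a` the surviving exponentials
`e^{-π λ₂ x²} e^{-π λ₁ x² / a}` and `e^{-π (λ₁ + λ₂ a) x² / a}` coincide, which produces the
single last term.
-/

open MeasureTheory Real Set Filter

lemma hasDerivAt_neg_exp_neg_mul_sq (b r : ℝ) :
    HasDerivAt (fun r => -exp (-b * r ^ 2)) (2 * b * r * exp (-b * r ^ 2)) r := by
  refine (((hasDerivAt_pow 2 r).const_mul (-b)).exp.neg).congr_deriv ?_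
  push_cast
  ring

lemma tendsto_exp_neg_mul_sq_atTop {b : ℝ} (hb : 0 < b) :
    Tendsto (fun r => exp (-b * r ^ 2)) atTop (nhds 0) := by
  refine tendsto_exp_atBot.comp ?_
  simpa only [neg_mul] using
    tendsto_neg_atBot_iff.mpr ((tendsto_pow_atTop two_ne_zero).const_mul_atTop hb)

theorem integral_two_mul_mul_exp_neg_mul_sq (b u v : ℝ) :
    ∫ r in u..v, 2 * b * r * exp (-b * r ^ 2) = exp (-b * u ^ 2) - exp (-b * v ^ 2) := by
  rw [intervalIntegral.integral_eq_sub_of_hasDerivAt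
    (fun r _ => hasDerivAt_neg_exp_neg_mul_sq b r)
    ((by fun_prop : Continuous _).intervalIntegrable _ _)]
  ring

theorem integral_Ioi_two_mul_mul_exp_neg_mul_sq {b : ℝ} (hb : 0 < b) (c : ℝ) :
    ∫ r in Ioi c, 2 * b * r * exp (-b * r ^ 2) = exp (-b * c ^ 2) := by
  have hint : Integrable fun r => 2 * b * r * exp (-b * r ^ 2) := by
    simpa only [mul_assoc] using (integrable_mul_exp_neg_mul_sq hb).const_mul (2 * b)
  rw [integral_Ioi_of_hasDerivAt_of_tendsto' (fun r _ => hasDerivAt_neg_exp_neg_mul_sq b r)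
    hint.integrableOn (tendsto_exp_neg_mul_sq_atTop hb).neg]
  ring

theorem integral_one_sub_exp_mul_two_mul_mul_exp_neg_mul_sq {b β : ℝ} (h : b + β ≠ 0)
    (u v : ℝ) :
    ∫ r in u..v, (1 - exp (-β * r ^ 2)) * (2 * b * r) * exp (-b * r ^ 2) =
      exp (-b * u ^ 2) - exp (-b * v ^ 2) -
        b / (b + β) * (exp (-(b + β) * u ^ 2) - exp (-(b + β) * v ^ 2)) := by
  have hsplit : ∀ r : ℝ, (1 - exp (-β * r ^ 2)) * (2 * b * r) * exp (-b * r ^ 2) =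
      2 * b * r * exp (-b * r ^ 2) -
        b / (b + β) * (2 * (b + β) * r * exp (-(b + β) * r ^ 2)) := by
    intro r
    rw [show -(b + β) * r ^ 2 = -β * r ^ 2 + -b * r ^ 2 by ring, exp_add]
    field_simp
  simp only [hsplit]
  rw [intervalIntegral.integral_sub ((by fun_prop : Continuous _).intervalIntegrable _ _)
      ((by fun_prop : Continuous _).intervalIntegrable _ _), intervalIntegral.integral_const_mul,
    integral_two_mul_mul_exp_neg_mul_sq, integral_two_mul_mul_exp_neg_mul_sq]

theorem joint_small_cell_distance_prob_general (lam₁ lam₂ a D x : ℝ)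
    (hlam₁ : 0 < lam₁) (hlam₂ : 0 < lam₂) (ha : 0 < a) :
    (1 - Real.exp (-π * lam₂ * x ^ 2)) *
        (∫ r in Ici (x / Real.sqrt a), 2 * π * lam₁ * r * Real.exp (-π * lam₁ * r ^ 2)) +
      (∫ r in D..(x / Real.sqrt a),
        (1 - Real.exp (-π * lam₂ * a * r ^ 2)) * (2 * π * lam₁ * r) *
          Real.exp (-π * lam₁ * r ^ 2)) =
      Real.exp (-π * lam₁ * D ^ 2) -
        lam₁ / (lam₁ + lam₂ * a) * Real.exp (-π * (lam₁ + lam₂ * a) * D ^ 2) -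
        lam₂ * a / (lam₁ + lam₂ * a) * Real.exp (-π * (lam₁ / a + lam₂) * x ^ 2) := by
  have hIoi := integral_Ioi_two_mul_mul_exp_neg_mul_sq (mul_pos pi_pos hlam₁) (x / √a)
  have hInt := integral_one_sub_exp_mul_two_mul_mul_exp_neg_mul_sq
    (b := π * lam₁) (β := π * lam₂ * a) (by positivity) D (x / √a)
  simp only [← neg_mul, ← mul_assoc 2 π lam₁] at hIoi hInt
  rw [integral_Ici_eq_integral_Ioi, hIoi, hInt]
  have hsq : (x / √a) ^ 2 = x ^ 2 / a := by rw [div_pow, sq_sqrt ha.le]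
  have hs : lam₁ + lam₂ * a ≠ 0 := by positivity
  have hexpD : exp (-(π * lam₁ + π * lam₂ * a) * D ^ 2) =
      exp (-π * (lam₁ + lam₂ * a) * D ^ 2) := by
    congr 1; ring
  have hexpx : exp (-(π * lam₁ + π * lam₂ * a) * (x / √a) ^ 2) =
      exp (-π * (lam₁ / a + lam₂) * x ^ 2) := by
    rw [hsq]; congr 1; field_simp
  have hexp_mul : exp (-π * lam₂ * x ^ 2) * exp (-π * lam₁ * (x / √a) ^ 2) =
      exp (-π * (lam₁ / a + lam₂) * x ^ 2) := by
    rw [← exp_add, hsq]; congr 1; field_simp; ring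
  have hcoef : π * lam₁ / (π * lam₁ + π * lam₂ * a) = lam₁ / (lam₁ + lam₂ * a) := by
    rw [mul_assoc π lam₂, ← mul_add, mul_div_mul_left _ _ pi_ne_zero]
  rw [hexpD, hexpx, hcoef, ← hexp_mul]
  field_simp
  ring

/-- For reals `λ₁, λ₂ > 0`, `a > 0`, `D ≥ 0` and `x ≥ √a D`:
`(1 − e^(−π λ₂ x²)) ∫_{x/√a}^∞ 2π λ₁ r e^(−π λ₁ r²) dr
  + ∫_D^{x/√a} (1 − e^(−π λ₂ a r²)) 2π λ₁ r e^(−π λ₁ r²) dr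
  = e^(−π λ₁ D²) − (λ₁/(λ₁+λ₂a)) e^(−π (λ₁+λ₂a) D²)
    − (λ₂a/(λ₁+λ₂a)) e^(−π (λ₁/a+λ₂) x²)`. -/
theorem joint_small_cell_distance_prob (lam₁ lam₂ a D x : ℝ)
    (hlam₁ : 0 < lam₁) (hlam₂ : 0 < lam₂) (ha : 0 < a) (hD : 0 ≤ D)
    (hx : Real.sqrt a * D ≤ x) :
    (1 - Real.exp (-π * lam₂ * x ^ 2)) *
        (∫ r in Ici (x / Real.sqrt a), 2 * π * lam₁ * r * Real.exp (-π * lam₁ * r ^ 2)) +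
      (∫ r in D..(x / Real.sqrt a),
        (1 - Real.exp (-π * lam₂ * a * r ^ 2)) * (2 * π * lam₁ * r) *
          Real.exp (-π * lam₁ * r ^ 2)) =
      Real.exp (-π * lam₁ * D ^ 2) -
        lam₁ / (lam₁ + lam₂ * a) * Real.exp (-π * (lam₁ + lam₂ * a) * D ^ 2) -
        lam₂ * a / (lam₁ + lam₂ * a) * Real.exp (-π * (lam₁ / a + lam₂) * x ^ 2) :=
  joint_small_cell_distance_prob_general lam₁ lam₂ a D x hlam₁ hlam₂ ha
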